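/- Let n ≥ 1 and R ≥ 2. For each i ∈ {1,…,n} and r ∈ {1,…,R}, let X_{ir} be ℝ^d-valued, square-integrable random vectors such that the families (X_{i1},…,X_{iR}) are mutually independent across i, and for each fixed i the vectors X_{i1},…,X_{iR} are i.i.d. with mean μ_i ∈ ℝ^d and covariance matrix Σ_i. Define X̄_i := (1/R)Σ_{r=1}^R X_{ir}, X̄ := (1/n)Σ_{i=1}^n X̄_i, Σ̂_i := (1/(R(R−1)))Σ_{r=1}^R (X_{ir} − X̄_i)(X_{ir} − X̄_i)ᵀ, and μ̄ := (1/n)Σ_{i=1}^n μ_i. Then E[ (1/n)Σ_{i=1}^n { (X̄_i − X̄)(X̄_i − X̄)ᵀ + Σ̂_i/n } ] = (1/n)Σ_{i=1}^n { (μ_i − μ̄)(μ_i − μ̄)ᵀ + Σ_i/R }. -/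

import Mathlib

open MeasureTheory ProbabilityTheory Filter
open scoped RealInnerProductSpace

noncomputable section

/-- Euclidean space ℝ^d. -/
abbrev Euc (d : ℕ) := EuclideanSpace ℝ (Fin d)

/-- Frobenius (Hilbert–Schmidt) norm of a square matrix. -/
def frobNorm {d : ℕ} (M : Matrix (Fin d) (Fin d) ℝ) : ℝ :=
  Real.sqrt (∑ i, ∑ j, (M i j) ^ 2)

/-- Action of a `d × d` matrix on a vector of `ℝ^d`. -/
def mulVecE {d : ℕ} (M : Matrix (Fin d) (Fin d) ℝ) (v : Euc d) : Euc d :=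
  (EuclideanSpace.equiv (Fin d) ℝ).symm (M.mulVec ((EuclideanSpace.equiv (Fin d) ℝ) v))

/-- The standard Gaussian measure on ℝ^d. -/
def stdGaussian (d : ℕ) : Measure (Euc d) :=
  (Measure.pi fun _ : Fin d => gaussianReal 0 1).map
    ((EuclideanSpace.equiv (Fin d) ℝ).symm)

/-- The uniform probability measure on a finite type. -/
def uniformMeasure (ι : Type*) [Fintype ι] [MeasurableSpace ι] : Measure ι :=
  (Fintype.card ι : ENNReal)⁻¹ • Measure.count

/-- A coupling of two measures. -/
def IsCoupling {E : Type*} [MeasurableSpace E] (μ : Measure (E × E)) (p q : Measure E) : Prop :=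
  μ.map Prod.fst = p ∧ μ.map Prod.snd = q

/-- 2-Wasserstein distance. -/
def W2 {E : Type*} [MeasurableSpace E] [NormedAddCommGroup E] (p q : Measure E) : ℝ :=
  sInf {r : ℝ | ∃ μ : Measure (E × E), IsCoupling μ p q ∧
    r = Real.sqrt (∫ z, ‖z.1 - z.2‖ ^ 2 ∂μ)}

/-- One SMLD update. -/
def smldUpdate (d n S : ℕ) (V : Fin (n + 1) → Euc d → Euc d)
    (sqrtA : Euc d → Matrix (Fin d) (Fin d) ℝ) (ε : ℝ)
    (ϑ : Euc d) (ns : (Fin S → Fin n) × Euc d) : Euc d :=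
  ϑ - ε • (((n : ℝ) / (S : ℝ)) • ∑ s : Fin S, V (Fin.succ (ns.1 s)) ϑ + V 0 ϑ)
    + Real.sqrt (2 * ε) • mulVecE (sqrtA ϑ) ns.2

/-- The action of the SMLD Markov kernel on a measure. -/
def smldStep (d n S : ℕ) (V : Fin (n + 1) → Euc d → Euc d)
    (sqrtA : Euc d → Matrix (Fin d) (Fin d) ℝ) (ε : ℝ)
    (π : Measure (Euc d)) : Measure (Euc d) :=
  Measure.map (fun p : Euc d × ((Fin S → Fin n) × Euc d) => smldUpdate d n S V sqrtA ε p.1 p.2)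
    (π.prod ((uniformMeasure (Fin S → Fin n)).prod (stdGaussian d)))

/-- The stochastic mirror Langevin dynamics (SMLD) Markov chain. -/
structure SMLD (d n S : ℕ) (V : Fin (n + 1) → Euc d → Euc d)
    (sqrtA : Euc d → Matrix (Fin d) (Fin d) ℝ) (ε : ℝ)
    (Ω : Type) [MeasurableSpace Ω] (P : Measure Ω) where
  ϑ : ℕ → Ω → Euc d
  ι : ℕ → Ω → Fin S → Fin n
  Z : ℕ → Ω → Euc d
  meas_init : Measurable (ϑ 0)
  meas_ι : ∀ k, Measurable (ι k)
  meas_Z : ∀ k, Measurable (Z k)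
  step : ∀ k ω, ϑ (k + 1) ω = smldUpdate d n S V sqrtA ε (ϑ k ω) (ι k ω, Z k ω)
  law_noise : ∀ k, P.map (fun ω => (ι k ω, Z k ω)) =
    (uniformMeasure (Fin S → Fin n)).prod (stdGaussian d)
  indep_noise : iIndepFun (fun k ω => (ι k ω, Z k ω)) P
  indep_init : IndepFun (ϑ 0) (fun ω (k : ℕ) => (ι k ω, Z k ω)) P

end

/-!
For pairwise uncorrelated `U₁, …, Uₘ` and `V₁, …, Vₘ` with sample means `Ū`, `V̄`, bilinearity of
the covariance gives `E[(Uᵣ - Ū)(Vᵣ - V̄)] = (EUᵣ - avg EU)(EVᵣ - avg EV) + (1 - 2/m) Cov(Uᵣ, Vᵣ)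
+ m⁻² Σₜ Cov(Uₜ, Vₜ)`. Inside group `i` the means agree, so summing over `r` shows that `Σ̂ᵢ` is
unbiased for `Σᵢ / R`. The group means `X̄ᵢ` are again uncorrelated, with covariance `Σᵢ / R`, so
the between-group term has expectation `(μᵢ - μ̄)(μᵢ - μ̄)ᵀ + ((1 - 2/n) Σᵢ + n⁻² Σₖ Σₖ) / R`;
averaged over `i` this supplies the fraction `1 - 1/n` of `Σᵢ / R`, and the correction `Σ̂ᵢ / n` the rest.
Independence enters only through the vanishing of cross-covariances of coordinates.
-/

noncomputable def sampleMean {κ E : Type*} [Fintype κ] [AddCommMonoid E] [Module ℝ E]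
    (x : κ → E) : E :=
  (Fintype.card κ : ℝ)⁻¹ • ∑ r, x r

section SampleMean

variable {κ : Type*} [Fintype κ]

lemma sampleMean_apply {Ω E : Type*} [AddCommMonoid E] [Module ℝ E] (U : κ → Ω → E) (ω : Ω) :
    sampleMean U ω = sampleMean fun r ↦ U r ω := by
  simp [sampleMean, Finset.sum_apply]

lemma sampleMean_const [Nonempty κ] {E : Type*} [AddCommMonoid E] [Module ℝ E] (x : E) :
    sampleMean (fun _ : κ ↦ x) = x := by
  rw [sampleMean, Finset.sum_const, Finset.card_univ, ← Nat.cast_smul_eq_nsmul ℝ, smul_smul,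
    inv_mul_cancel₀ (Nat.cast_ne_zero.2 Fintype.card_ne_zero), one_smul]

variable {Ω : Type*} [MeasurableSpace Ω] {μ : Measure Ω} {U V : κ → Ω → ℝ}

lemma memLp_sampleMean (hU : ∀ r, MemLp (U r) 2 μ) : MemLp (sampleMean U) 2 μ :=
  (memLp_finsetSum' _ fun r _ ↦ hU r).const_smul _

lemma integral_sampleMean (hU : ∀ r, Integrable (U r) μ) :
    ∫ ω, sampleMean U ω ∂μ = sampleMean fun r ↦ ∫ ω, U r ω ∂μ := by
  simp_rw [sampleMean_apply, sampleMean, smul_eq_mul]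
  rw [integral_const_mul, integral_finsetSum _ fun r _ ↦ hU r]

lemma integrable_sub_sampleMean_mul_sub_sampleMean (hU : ∀ r, MemLp (U r) 2 μ)
    (hV : ∀ r, MemLp (V r) 2 μ) (r : κ) :
    Integrable (fun ω ↦ (U r ω - sampleMean U ω) * (V r ω - sampleMean V ω)) μ :=
  ((hU r).sub (memLp_sampleMean hU)).integrable_mul ((hV r).sub (memLp_sampleMean hV))

variable [IsFiniteMeasure μ]

lemma covariance_sum_right_of_uncorrelated (hU : ∀ r, MemLp (U r) 2 μ)
    (hV : ∀ r, MemLp (V r) 2 μ) (hUV : ∀ r t, r ≠ t → cov[U r, V t; μ] = 0) (r : κ) :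
    cov[U r, ∑ t, V t; μ] = cov[U r, V r; μ] := by
  rw [covariance_sum_right hV (hU r)]
  exact Finset.sum_eq_single r (fun t _ htr ↦ hUV r t htr.symm) (by simp)

lemma covariance_sum_left_of_uncorrelated (hU : ∀ r, MemLp (U r) 2 μ)
    (hV : ∀ r, MemLp (V r) 2 μ) (hUV : ∀ r t, r ≠ t → cov[U r, V t; μ] = 0) (t : κ) :
    cov[∑ r, U r, V t; μ] = cov[U t, V t; μ] := by
  rw [covariance_sum_left hU (hV t)]
  exact Finset.sum_eq_single t (fun r _ hrt ↦ hUV r t hrt) (by simp)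

lemma covariance_sum_sum_of_uncorrelated (hU : ∀ r, MemLp (U r) 2 μ)
    (hV : ∀ r, MemLp (V r) 2 μ) (hUV : ∀ r t, r ≠ t → cov[U r, V t; μ] = 0) :
    cov[∑ r, U r, ∑ t, V t; μ] = ∑ r, cov[U r, V r; μ] := by
  rw [covariance_sum_left hU (memLp_finsetSum' _ fun t _ ↦ hV t)]
  simp_rw [covariance_sum_right_of_uncorrelated hU hV hUV]

lemma covariance_sampleMean_sampleMean_of_uncorrelated (hU : ∀ r, MemLp (U r) 2 μ)
    (hV : ∀ r, MemLp (V r) 2 μ) (hUV : ∀ r t, r ≠ t → cov[U r, V t; μ] = 0) :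
    cov[sampleMean U, sampleMean V; μ] =
      (Fintype.card κ : ℝ)⁻¹ ^ 2 * ∑ r, cov[U r, V r; μ] := by
  rw [sampleMean, sampleMean, covariance_smul_left, covariance_smul_right,
    covariance_sum_sum_of_uncorrelated hU hV hUV]
  ring

lemma covariance_sub_sampleMean_of_uncorrelated (hU : ∀ r, MemLp (U r) 2 μ)
    (hV : ∀ r, MemLp (V r) 2 μ) (hUV : ∀ r t, r ≠ t → cov[U r, V t; μ] = 0) (r : κ) :
    cov[U r - sampleMean U, V r - sampleMean V; μ] =
      (1 - 2 * (Fintype.card κ : ℝ)⁻¹) * cov[U r, V r; μ] +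
        (Fintype.card κ : ℝ)⁻¹ ^ 2 * ∑ t, cov[U t, V t; μ] := by
  rw [covariance_sub_sub (hU r) (memLp_sampleMean hU) (hV r) (memLp_sampleMean hV),
    covariance_sampleMean_sampleMean_of_uncorrelated hU hV hUV, sampleMean, sampleMean,
    covariance_smul_left, covariance_smul_right, covariance_sum_left_of_uncorrelated hU hV hUV,
    covariance_sum_right_of_uncorrelated hU hV hUV]
  ring

end SampleMean

section Moments

variable {Ω : Type*} [MeasurableSpace Ω] {μ : Measure Ω} [IsProbabilityMeasure μ]

lemma integral_mul_eq_mul_add_covariance {X Y : Ω → ℝ} (hX : MemLp X 2 μ) (hY : MemLp Y 2 μ) :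
    ∫ ω, X ω * Y ω ∂μ = (∫ ω, X ω ∂μ) * (∫ ω, Y ω ∂μ) + cov[X, Y; μ] := by
  rw [covariance_eq_sub hX hY, Pi.mul_def]
  ring

variable {κ : Type*} [Fintype κ] {U V : κ → Ω → ℝ}

lemma integral_sub_sampleMean_mul_sub_sampleMean (hU : ∀ r, MemLp (U r) 2 μ)
    (hV : ∀ r, MemLp (V r) 2 μ) (hUV : ∀ r t, r ≠ t → cov[U r, V t; μ] = 0) (r : κ) :
    ∫ ω, (U r ω - sampleMean U ω) * (V r ω - sampleMean V ω) ∂μ =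
      ((∫ ω, U r ω ∂μ) - sampleMean fun t ↦ ∫ ω, U t ω ∂μ) *
          ((∫ ω, V r ω ∂μ) - sampleMean fun t ↦ ∫ ω, V t ω ∂μ) +
        ((1 - 2 * (Fintype.card κ : ℝ)⁻¹) * cov[U r, V r; μ] +
          (Fintype.card κ : ℝ)⁻¹ ^ 2 * ∑ t, cov[U t, V t; μ]) := by
  have hUint : ∀ t, Integrable (U t) μ := fun t ↦ (hU t).integrable one_le_two
  have hVint : ∀ t, Integrable (V t) μ := fun t ↦ (hV t).integrable one_le_two
  refine (integral_mul_eq_mul_add_covariance ((hU r).sub (memLp_sampleMean hU))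
    ((hV r).sub (memLp_sampleMean hV))).trans ?_
  simp only [Pi.sub_apply]
  rw [integral_sub (hUint r) ((memLp_sampleMean hU).integrable one_le_two),
    integral_sub (hVint r) ((memLp_sampleMean hV).integrable one_le_two),
    integral_sampleMean hUint, integral_sampleMean hVint,
    covariance_sub_sampleMean_of_uncorrelated hU hV hUV]

lemma integral_sum_sub_sampleMean_mul_sub_sampleMean [Nonempty κ] (hU : ∀ r, MemLp (U r) 2 μ)
    (hV : ∀ r, MemLp (V r) 2 μ) (hUV : ∀ r t, r ≠ t → cov[U r, V t; μ] = 0) {a b σ : ℝ}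
    (hUa : ∀ r, ∫ ω, U r ω ∂μ = a) (hVb : ∀ r, ∫ ω, V r ω ∂μ = b)
    (hσ : ∀ r, cov[U r, V r; μ] = σ) :
    ∫ ω, ∑ r, (U r ω - sampleMean U ω) * (V r ω - sampleMean V ω) ∂μ =
      ((Fintype.card κ : ℝ) - 1) * σ := by
  rw [integral_finsetSum _ fun r _ ↦ integrable_sub_sampleMean_mul_sub_sampleMean hU hV r]
  simp_rw [integral_sub_sampleMean_mul_sub_sampleMean hU hV hUV, hUa, hVb, hσ, sampleMean_const,
    sub_self, zero_mul, zero_add, Finset.sum_const, Finset.card_univ, nsmul_eq_mul]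
  have hm : (Fintype.card κ : ℝ) ≠ 0 := Nat.cast_ne_zero.2 Fintype.card_ne_zero
  field_simp
  ring

end Moments

section TwoLevel

variable {Ω : Type*} [MeasurableSpace Ω] {μ : Measure Ω}
  {ι κ : Type*} [Fintype κ] {Y Z : ι → κ → Ω → ℝ}

lemma covariance_sampleMean_sampleMean_of_ne [IsFiniteMeasure μ] (hY : ∀ i r, MemLp (Y i r) 2 μ)
    (hZ : ∀ i r, MemLp (Z i r) 2 μ)
    (hYZ : ∀ i r k t, (i, r) ≠ (k, t) → cov[Y i r, Z k t; μ] = 0) {i k : ι} (hik : i ≠ k) :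
    cov[sampleMean (Y i), sampleMean (Z k); μ] = 0 := by
  rw [sampleMean, sampleMean, covariance_smul_left, covariance_smul_right,
    covariance_sum_sum (hY i) (hZ k)]
  simp [hYZ i _ k _ (by simp [hik])]

variable [IsProbabilityMeasure μ] [Fintype ι]

lemma integral_sub_grand_mean_mul_sub_grand_mean [Nonempty κ] (hY : ∀ i r, MemLp (Y i r) 2 μ)
    (hZ : ∀ i r, MemLp (Z i r) 2 μ)
    (hYZ : ∀ i r k t, (i, r) ≠ (k, t) → cov[Y i r, Z k t; μ] = 0) {a b s : ι → ℝ}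
    (hYa : ∀ i r, ∫ ω, Y i r ω ∂μ = a i) (hZb : ∀ i r, ∫ ω, Z i r ω ∂μ = b i)
    (hs : ∀ i r, cov[Y i r, Z i r; μ] = s i) (i : ι) :
    ∫ ω, (sampleMean (Y i) ω - sampleMean (fun k ↦ sampleMean (Y k)) ω) *
        (sampleMean (Z i) ω - sampleMean (fun k ↦ sampleMean (Z k)) ω) ∂μ =
      (a i - sampleMean a) * (b i - sampleMean b) +
        ((1 - 2 * (Fintype.card ι : ℝ)⁻¹) * (s i / Fintype.card κ) +
          (Fintype.card ι : ℝ)⁻¹ ^ 2 * ∑ k, s k / Fintype.card κ) := by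
  have hmeanY : ∀ k, ∫ ω, sampleMean (Y k) ω ∂μ = a k := fun k ↦ by
    rw [integral_sampleMean fun r ↦ (hY k r).integrable one_le_two]
    simp_rw [hYa, sampleMean_const]
  have hmeanZ : ∀ k, ∫ ω, sampleMean (Z k) ω ∂μ = b k := fun k ↦ by
    rw [integral_sampleMean fun r ↦ (hZ k r).integrable one_le_two]
    simp_rw [hZb, sampleMean_const]
  have hcov : ∀ k, cov[sampleMean (Y k), sampleMean (Z k); μ] = s k / Fintype.card κ :=
      fun k ↦ by
    rw [covariance_sampleMean_sampleMean_of_uncorrelated (hY k) (hZ k)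
      (fun r t hrt ↦ hYZ k r k t (by simp [hrt]))]
    simp_rw [hs, Finset.sum_const, Finset.card_univ, nsmul_eq_mul]
    field_simp
  rw [integral_sub_sampleMean_mul_sub_sampleMean (fun k ↦ memLp_sampleMean (hY k))
    (fun k ↦ memLp_sampleMean (hZ k))
    (fun i k ↦ covariance_sampleMean_sampleMean_of_ne hY hZ hYZ)]
  simp_rw [hmeanY, hmeanZ, hcov]

theorem integral_group_covariance_estimator (hκ : 1 < Fintype.card κ)
    (hY : ∀ i r, MemLp (Y i r) 2 μ) (hZ : ∀ i r, MemLp (Z i r) 2 μ)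
    (hYZ : ∀ i r k t, (i, r) ≠ (k, t) → cov[Y i r, Z k t; μ] = 0) {a b s : ι → ℝ}
    (hYa : ∀ i r, ∫ ω, Y i r ω ∂μ = a i) (hZb : ∀ i r, ∫ ω, Z i r ω ∂μ = b i)
    (hs : ∀ i r, cov[Y i r, Z i r; μ] = s i) :
    ∫ ω, (Fintype.card ι : ℝ)⁻¹ * ∑ i,
        ((sampleMean (Y i) ω - sampleMean (fun k ↦ sampleMean (Y k)) ω) *
            (sampleMean (Z i) ω - sampleMean (fun k ↦ sampleMean (Z k)) ω) +
          ((Fintype.card κ : ℝ) * (Fintype.card κ - 1))⁻¹ *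
              (∑ r, (Y i r ω - sampleMean (Y i) ω) * (Z i r ω - sampleMean (Z i) ω)) /
            Fintype.card ι) ∂μ =
      (Fintype.card ι : ℝ)⁻¹ *
        ∑ i, ((a i - sampleMean a) * (b i - sampleMean b) + s i / Fintype.card κ) := by
  have : Nonempty κ := Fintype.card_pos_iff.1 (by omega)
  have hbetween := integrable_sub_sampleMean_mul_sub_sampleMean
    (fun k ↦ memLp_sampleMean (μ := μ) (hY k)) (fun k ↦ memLp_sampleMean (hZ k))
  have hwithin : ∀ i, Integrable (fun ω ↦
      ∑ r, (Y i r ω - sampleMean (Y i) ω) * (Z i r ω - sampleMean (Z i) ω)) μ := fun i ↦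
    integrable_finsetSum _ fun r _ ↦ integrable_sub_sampleMean_mul_sub_sampleMean (hY i) (hZ i) r
  have hcorrection := fun i ↦
    ((hwithin i).const_mul ((Fintype.card κ : ℝ) * (Fintype.card κ - 1))⁻¹).div_const
      (Fintype.card ι : ℝ)
  rw [integral_const_mul, integral_finsetSum _ fun i _ ↦ (hbetween i).fun_add (hcorrection i)]
  simp_rw [integral_add (hbetween _) (hcorrection _), integral_div, integral_const_mul,
    integral_sub_grand_mean_mul_sub_grand_mean hY hZ hYZ hYa hZb hs,
    fun i ↦ integral_sum_sub_sampleMean_mul_sub_sampleMean (hY i) (hZ i)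
      (fun r t hrt ↦ hYZ i r i t (by simp [hrt])) (hYa i) (hZb i) (hs i)]
  have hm : (Fintype.card κ : ℝ) - 1 ≠ 0 := sub_ne_zero.2 (by exact_mod_cast hκ.ne')
  have hcorrection_eq : ∀ x, ((Fintype.card κ : ℝ) * (Fintype.card κ - 1))⁻¹ *
      ((Fintype.card κ - 1) * s x) / Fintype.card ι =
        (Fintype.card ι : ℝ)⁻¹ * (s x / Fintype.card κ) := fun x ↦ by
    field_simp
  simp_rw [hcorrection_eq, Finset.sum_add_distrib, ← Finset.mul_sum, Finset.sum_const,
    Finset.card_univ, nsmul_eq_mul]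
  -- valid also for empty `ι`, where `(0 : ℝ)⁻¹ = 0`
  have hn : (Fintype.card ι : ℝ) * (Fintype.card ι : ℝ)⁻¹ * (Fintype.card ι : ℝ)⁻¹ =
      (Fintype.card ι : ℝ)⁻¹ := by
    simpa only [inv_inv] using inv_mul_mul_self (Fintype.card ι : ℝ)⁻¹
  linear_combination ((Fintype.card ι : ℝ)⁻¹ * ∑ k, s k / Fintype.card κ) * hn

end TwoLevel

lemma indepFun_entry_of_iIndepFun_rows {Ω ι κ E : Type*} [MeasurableSpace Ω] {P : Measure Ω}
    [MeasurableSpace E] {X : ι → κ → Ω → E} (hrows : iIndepFun (fun i ω r ↦ X i r ω) P)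
    (hrow : ∀ i, iIndepFun (X i) P) {i k : ι} {r t : κ} (h : (i, r) ≠ (k, t)) :
    IndepFun (X i r) (X k t) P := by
  by_cases hik : i = k
  · subst hik
    exact (hrow i).indepFun fun hrt ↦ h (by rw [hrt])
  · exact (hrows.indepFun hik).comp (measurable_pi_apply r) (measurable_pi_apply t)

theorem covariance_estimator_unbiased_general
    (d n R : ℕ) (hR : 2 ≤ R)
    (Ω : Type) [MeasurableSpace Ω] (P : Measure Ω) [IsProbabilityMeasure P]
    (X : Fin n → Fin R → Ω → Euc d)
    (μv : Fin n → Euc d) (Smat : Fin n → Matrix (Fin d) (Fin d) ℝ)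
    (hL2 : ∀ i r, MemLp (X i r) 2 P)
    (hindep_fam : iIndepFun
      (fun i ω => fun r : Fin R => X i r ω) P)
    (hiid_indep : ∀ i, iIndepFun (fun r => X i r) P)
    (hmean : ∀ i r, (∫ ω, X i r ω ∂P) = μv i)
    (hcov : ∀ i r j l, (∫ ω, (X i r ω j - μv i j) * (X i r ω l - μv i l) ∂P) = Smat i j l) :
    let Xbari : Fin n → Ω → Euc d := fun i ω => (1 / (R : ℝ)) • ∑ r : Fin R, X i r ω
    let Xbar : Ω → Euc d := fun ω => (1 / (n : ℝ)) • ∑ i : Fin n, Xbari i ω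
    let Shat : Fin n → Ω → Matrix (Fin d) (Fin d) ℝ := fun i ω =>
      Matrix.of fun j l => (1 / ((R : ℝ) * ((R : ℝ) - 1))) *
        ∑ r : Fin R, (X i r ω j - Xbari i ω j) * (X i r ω l - Xbari i ω l)
    let μbar : Euc d := (1 / (n : ℝ)) • ∑ i : Fin n, μv i
    ∀ j l : Fin d,
      (∫ ω, (1 / (n : ℝ)) *
          ∑ i : Fin n,
            ((Xbari i ω j - Xbar ω j) * (Xbari i ω l - Xbar ω l) + Shat i ω j l / (n : ℝ))
          ∂P) =
        (1 / (n : ℝ)) *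
          ∑ i : Fin n,
            ((μv i j - μbar j) * (μv i l - μbar l) + Smat i j l / (R : ℝ)) := by
  intro Xbari Xbar Shat μbar j l
  have hcoord : ∀ m i r, MemLp (fun ω ↦ X i r ω m) 2 P := fun m i r ↦
    (EuclideanSpace.proj (𝕜 := ℝ) m).comp_memLp' (hL2 i r)
  have hcoord_mean : ∀ m i r, ∫ ω, X i r ω m ∂P = μv i m := fun m i r ↦ by
    rw [← hmean i r]
    exact (EuclideanSpace.proj (𝕜 := ℝ) m).integral_comp_comm ((hL2 i r).integrable one_le_two)
  have hcoord_cov : ∀ i r, cov[fun ω ↦ X i r ω j, fun ω ↦ X i r ω l; P] = Smat i j l :=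
    fun i r ↦ by rw [covariance, hcoord_mean, hcoord_mean, hcov]
  have hcoord_uncorr : ∀ i r k t, (i, r) ≠ (k, t) →
      cov[fun ω ↦ X i r ω j, fun ω ↦ X k t ω l; P] = 0 := fun i r k t h ↦
    ((indepFun_entry_of_iIndepFun_rows hindep_fam hiid_indep h).comp
      (EuclideanSpace.proj (𝕜 := ℝ) j).measurable
      (EuclideanSpace.proj (𝕜 := ℝ) l).measurable).covariance_eq_zero (hcoord j i r) (hcoord l k t)
  have key := integral_group_covariance_estimator (by rw [Fintype.card_fin]; omega)
    (hcoord j) (hcoord l) hcoord_uncorr (hcoord_mean j) (hcoord_mean l) hcoord_cov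
  simpa [Xbari, Xbar, Shat, μbar, sampleMean] using key

/-- unbiasedness of the gradient-covariance estimator, eq. (10)–(11):
for mutually independent families `(X_{i1},…,X_{iR})`, i.i.d. within each family with mean
`μ_i` and covariance `Σ_i`, the estimator `(1/n)Σ_i {(X̄_i−X̄)(X̄_i−X̄)ᵀ + Σ̂_i/n}` has
expectation `(1/n)Σ_i {(μ_i−μ̄)(μ_i−μ̄)ᵀ + Σ_i/R}`. -/
theorem covariance_estimator_unbiased
    (d n R : ℕ) (hn : 1 ≤ n) (hR : 2 ≤ R)
    (Ω : Type) [MeasurableSpace Ω] (P : Measure Ω) [IsProbabilityMeasure P]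
    (X : Fin n → Fin R → Ω → Euc d)
    (μv : Fin n → Euc d) (Smat : Fin n → Matrix (Fin d) (Fin d) ℝ)
    (hmeas : ∀ i r, Measurable (X i r))
    (hL2 : ∀ i r, MemLp (X i r) 2 P)
    (hindep_fam : iIndepFun
      (fun i ω => fun r : Fin R => X i r ω) P)
    (hiid_indep : ∀ i, iIndepFun (fun r => X i r) P)
    (hiid_ident : ∀ i r r', IdentDistrib (X i r) (X i r') P P)
    (hmean : ∀ i r, (∫ ω, X i r ω ∂P) = μv i)
    (hcov : ∀ i r j l, (∫ ω, (X i r ω j - μv i j) * (X i r ω l - μv i l) ∂P) = Smat i j l) :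
    let Xbari : Fin n → Ω → Euc d := fun i ω => (1 / (R : ℝ)) • ∑ r : Fin R, X i r ω
    let Xbar : Ω → Euc d := fun ω => (1 / (n : ℝ)) • ∑ i : Fin n, Xbari i ω
    let Shat : Fin n → Ω → Matrix (Fin d) (Fin d) ℝ := fun i ω =>
      Matrix.of fun j l => (1 / ((R : ℝ) * ((R : ℝ) - 1))) *
        ∑ r : Fin R, (X i r ω j - Xbari i ω j) * (X i r ω l - Xbari i ω l)
    let μbar : Euc d := (1 / (n : ℝ)) • ∑ i : Fin n, μv i
    ∀ j l : Fin d,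
      (∫ ω, (1 / (n : ℝ)) *
          ∑ i : Fin n,
            ((Xbari i ω j - Xbar ω j) * (Xbari i ω l - Xbar ω l) + Shat i ω j l / (n : ℝ))
          ∂P) =
        (1 / (n : ℝ)) *
          ∑ i : Fin n,
            ((μv i j - μbar j) * (μv i l - μbar l) + Smat i j l / (R : ℝ)) :=
  covariance_estimator_unbiased_general d n R hR Ω P X μv Smat hL2 hindep_fam hiid_indep hmean hcov
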